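/- For γ: ℝ → ℝ² given by γ(t) = (t, 0) and constant radius λ(t) = 1, a smooth map f: ℝ → ℝ² is an envelope of the circle family C_{(γ,λ)} if and only if f(t) = (t, 1) for all t or f(t) = (t, -1) for all t. In particular, there are exactly two envelopes. -/

import Mathlib

noncomputable section

/-- The Euclidean plane. -/
abbrev Plane := EuclideanSpace ℝ (Fin 2)

/-- The standard scalar (dot) product on the plane. -/
def dotp (x y : Plane) : ℝ := inner ℝ x y

/-- The vector with coordinates `a`, `b`. -/
def vec2 (a b : ℝ) : Plane := (WithLp.equiv 2 (Fin 2 → ℝ)).symm ![a, b]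

/-- Anti-clockwise rotation by π/2. -/
def rotJ (v : Plane) : Plane := vec2 (-(v 1)) (v 0)

/-- `f` is an envelope of the circle family with center curve `γ` and radius
function `r`, on the parameter set `I`. -/
def IsEnvelope (I : Set ℝ) (γ : ℝ → Plane) (r : ℝ → ℝ) (f : ℝ → Plane) : Prop :=
  ContDiffOn ℝ (⊤ : ℕ∞) f I ∧
    ∀ t ∈ I, ‖f t - γ t‖ = r t ∧ dotp (deriv f t) (f t - γ t) = 0

lemma vec2_apply0 (a b : ℝ) : vec2 a b 0 = a := by simp [vec2]
lemma vec2_apply1 (a b : ℝ) : vec2 a b 1 = b := by simp [vec2]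

lemma plane_ext {x y : Plane} (h0 : x 0 = y 0) (h1 : x 1 = y 1) : x = y := by
  ext i; fin_cases i <;> assumption

lemma dotp_eq (x y : Plane) : dotp x y = x 0 * y 0 + x 1 * y 1 := by
  simp [dotp, PiLp.inner_apply, Fin.sum_univ_two]
  ring

lemma norm_sq_plane (x : Plane) : ‖x‖ ^ 2 = x 0 ^ 2 + x 1 ^ 2 := by
  rw [EuclideanSpace.norm_eq, Real.sq_sqrt (by positivity)]
  simp [Fin.sum_univ_two, sq_abs]

lemma vec2_eq_comb (a b : ℝ) : vec2 a b = a • vec2 1 0 + vec2 0 b := by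
  apply plane_ext <;>
    simp [PiLp.add_apply, PiLp.smul_apply, vec2_apply0, vec2_apply1]

lemma hasDerivAt_vec2 (c t : ℝ) : HasDerivAt (fun t => vec2 t c) (vec2 1 0) t := by
  have h : HasDerivAt (fun t : ℝ => t • vec2 1 0 + vec2 0 c) ((1 : ℝ) • vec2 1 0) t :=
    ((hasDerivAt_id t).smul_const (vec2 1 0)).add_const _
  rw [one_smul] at h
  exact h.congr_deriv rfl |>.congr_of_eventuallyEq
    (Filter.Eventually.of_forall fun s => (vec2_eq_comb s c))

lemma coord_hasDerivAt {f : ℝ → Plane} (hdf : Differentiable ℝ f) (i : Fin 2) (t : ℝ) :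
    HasDerivAt (fun s => f s i) (deriv f t i) t := by
  have := (EuclideanSpace.proj i (𝕜 := ℝ)).hasFDerivAt.comp_hasDerivAt t
    (hdf t).hasDerivAt
  exact this

theorem example_two_envelopes (f : ℝ → Plane) :
    IsEnvelope Set.univ (fun t => vec2 t 0) (fun _ => 1) f ↔
      (∀ t, f t = vec2 t 1) ∨ (∀ t, f t = vec2 t (-1)) := by
  constructor
  · rintro ⟨hsm, h⟩
    have hcd : ContDiff ℝ (⊤ : ℕ∞) f := contDiffOn_univ.mp hsm
    have hdf : Differentiable ℝ f := hcd.differentiable (by simp)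
    set u : ℝ → ℝ := fun t => f t 0 - t with hu_def
    set v : ℝ → ℝ := fun t => f t 1 with hv_def
    -- norm condition in coordinates
    have hnorm : ∀ t, u t ^ 2 + v t ^ 2 = 1 := by
      intro t
      have h1 := (h t trivial).1
      have h2 : ‖f t - vec2 t 0‖ ^ 2 = 1 := by rw [h1]; norm_num
      rw [norm_sq_plane] at h2
      simpa [hu_def, hv_def, PiLp.sub_apply, vec2_apply0, vec2_apply1] using h2
    -- dot condition in coordinates
    have hdot : ∀ t, deriv f t 0 * u t + deriv f t 1 * v t = 0 := by
      intro t
      have h1 := (h t trivial).2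
      rw [dotp_eq] at h1
      simpa [hu_def, hv_def, PiLp.sub_apply, vec2_apply0, vec2_apply1] using h1
    -- derivative of the (constant) squared norm
    have hA : ∀ t, 2 * u t * (deriv f t 0 - 1) + 2 * v t * deriv f t 1 = 0 := by
      intro t
      have hu' : HasDerivAt u (deriv f t 0 - 1) t :=
        (coord_hasDerivAt hdf 0 t).sub (hasDerivAt_id t)
      have hv' : HasDerivAt v (deriv f t 1) t := coord_hasDerivAt hdf 1 t
      have hsq : HasDerivAt (fun s => u s ^ 2 + v s ^ 2)
          (2 * u t * (deriv f t 0 - 1) + 2 * v t * deriv f t 1) t := by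
        have := ((hu'.pow 2).add (hv'.pow 2))
        refine this.congr_deriv ?_
        push_cast
        ring
      have hc : (fun s => u s ^ 2 + v s ^ 2) = fun _ => (1 : ℝ) := funext hnorm
      rw [hc] at hsq
      exact hsq.unique (hasDerivAt_const t 1)
    -- conclude u = 0
    have hu0 : ∀ t, u t = 0 := by
      intro t
      have h1 := hA t
      have h2 := hdot t
      nlinarith [h1, h2]
    have hv1 : ∀ t, v t ^ 2 = 1 := by
      intro t; have := hnorm t; have := hu0 t; nlinarith
    have hvpm : ∀ t, v t = 1 ∨ v t = -1 := by
      intro t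
      have : (v t - 1) * (v t + 1) = 0 := by nlinarith [hv1 t]
      rcases mul_eq_zero.mp this with h' | h'
      · left; linarith
      · right; linarith
    have hvcont : Continuous v := by
      have : Continuous fun t => f t 1 :=
        (EuclideanSpace.proj (1 : Fin 2) (𝕜 := ℝ)).continuous.comp hcd.continuous
      exact this
    have hconst : (∀ t, v t = 1) ∨ (∀ t, v t = -1) := by
      rcases hvpm 0 with h0 | h0
      · left
        intro t
        by_contra hne
        rcases hvpm t with h' | h'
        · exact hne h'
        · have hsub : Set.uIcc (v 0) (v t) ⊆ v '' Set.uIcc 0 t :=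
            intermediate_value_uIcc hvcont.continuousOn
          have h0m : (0 : ℝ) ∈ Set.uIcc (v 0) (v t) := by
            rw [h0, h']
            constructor <;> simp [min_le_iff, le_max_iff]
          obtain ⟨s, _, hs⟩ := hsub h0m
          have := hv1 s
          rw [hs] at this
          norm_num at this
      · right
        intro t
        by_contra hne
        rcases hvpm t with h' | h'
        · have hsub : Set.uIcc (v 0) (v t) ⊆ v '' Set.uIcc 0 t :=
            intermediate_value_uIcc hvcont.continuousOn
          have h0m : (0 : ℝ) ∈ Set.uIcc (v 0) (v t) := by
            rw [h0, h']
            constructor <;> simp [min_le_iff, le_max_iff]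
          obtain ⟨s, _, hs⟩ := hsub h0m
          have := hv1 s
          rw [hs] at this
          norm_num at this
        · exact hne h'
    rcases hconst with hc | hc
    · left
      intro t
      apply plane_ext
      · have := hu0 t; simp only [hu_def] at this
        rw [vec2_apply0]; linarith
      · rw [vec2_apply1]; exact hc t
    · right
      intro t
      apply plane_ext
      · have := hu0 t; simp only [hu_def] at this
        rw [vec2_apply0]; linarith
      · rw [vec2_apply1]; exact hc t
  · intro h
    have key : ∀ c : ℝ, |c| = 1 → (∀ t, f t = vec2 t c) →
        IsEnvelope Set.univ (fun t => vec2 t 0) (fun _ => 1) f := by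
      intro c hc hf
      have hfe : f = fun t => vec2 t c := funext hf
      constructor
      · rw [hfe]
        apply ContDiff.contDiffOn
        have : (fun t => vec2 t c) = fun t : ℝ => t • vec2 1 0 + vec2 0 c :=
          funext fun t => vec2_eq_comb t c
        rw [this]
        exact (contDiff_id.smul contDiff_const).add contDiff_const
      · intro t _
        have hderiv : deriv f t = vec2 1 0 := by
          rw [hfe]; exact (hasDerivAt_vec2 c t).deriv
        have hdiff : f t - vec2 t 0 = vec2 0 c := by
          rw [hf t]
          apply plane_ext <;>
            simp [PiLp.sub_apply, vec2_apply0, vec2_apply1]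
        constructor
        · show ‖f t - vec2 t 0‖ = 1
          rw [hdiff]
          have : ‖vec2 0 c‖ ^ 2 = 1 := by
            rw [norm_sq_plane, vec2_apply0, vec2_apply1]
            nlinarith [sq_abs c, hc]
          nlinarith [norm_nonneg (vec2 0 c), this]
        · rw [hderiv, hdiff, dotp_eq, vec2_apply0, vec2_apply1, vec2_apply0, vec2_apply1]
          ring
    rcases h with h | h
    · exact key 1 (by norm_num) h
    · exact key (-1) (by norm_num) h

end
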